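/- Under the continuous-time maximum-consensus dynamics ẋ_i(t) = max_{j ∈ N_i ∪ {i}} a_j(t)·(x_j(t) − x_i(t)), with each weight function a_j continuous and uniformly bounded above and below by positive constants, every node's state converges as t → ∞ to the maximum of the initial states: lim_{t→∞} x_i(t) = max_{1 ≤ j ≤ n} x_j(0) for every node i. -/

import Mathlib

/-!
Every state is nondecreasing, since the term `j = i` of the maximum vanishes, and the largest
state never increases, since at a node attaining it every term of the maximum is `≤ 0`. So the
initial maximiser stays at `M = max_j x_j(0)` and all states stay below `M`. If a node tends to
`M`, a neighbour `v` staying below `M - ε` would eventually have `ẋ_v ≥ δ ε / 2` and grow without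
bound; connectivity spreads the convergence to every node.
-/

open Filter Topology Set

theorem add_mul_sub_le_of_hasDerivAt_ge {g g' : ℝ → ℝ} {a C : ℝ}
    (hg : ∀ t, a ≤ t → HasDerivAt g (g' t) t) (hC : ∀ t, a ≤ t → C ≤ g' t)
    {t : ℝ} (ht : a ≤ t) : g a + C * (t - a) ≤ g t := by
  have hmono : MonotoneOn (fun τ => g τ - C * τ) (Ici a) := by
    refine monotoneOn_of_hasDerivWithinAt_nonneg (convex_Ici a)
      (fun τ hτ => ((hg τ hτ).sub ((hasDerivAt_id τ).const_mul C)).continuousAt.continuousWithinAt)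
      (fun τ hτ => ((hg τ (le_of_lt (by simpa using hτ))).sub
        ((hasDerivAt_id τ).const_mul C)).hasDerivWithinAt) fun τ hτ => ?_
    have := hC τ (le_of_lt (by simpa using hτ))
    simp only [mul_one]
    linarith
  have := hmono self_mem_Ici ht ht
  simp only at this
  linarith

theorem monotoneOn_of_hasDerivAt_nonneg {g g' : ℝ → ℝ} {a : ℝ}
    (hg : ∀ t, a ≤ t → HasDerivAt g (g' t) t) (hg' : ∀ t, a ≤ t → 0 ≤ g' t) :
    MonotoneOn g (Ici a) := fun s hs t _ hst => by
  simpa using add_mul_sub_le_of_hasDerivAt_ge (fun τ hτ => hg τ (hs.trans hτ))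
    (fun τ hτ => hg' τ (hs.trans hτ)) hst

theorem Finset.eventually_slope_sup'_lt {ι : Type*} {s : Finset ι} (hs : s.Nonempty)
    {g : ℝ → ι → ℝ} {g' : ι → ℝ} {t r : ℝ}
    (hg : ∀ i ∈ s, HasDerivAt (fun τ => g τ i) (g' i) t)
    (hmax : ∀ i ∈ s, g t i = s.sup' hs (g t) → g' i < r) :
    ∀ᶠ z in 𝓝[>] t, slope (fun τ => s.sup' hs (g τ)) t z < r := by
  set m := s.sup' hs (g t)
  have hcomp : ∀ i ∈ s, ∀ᶠ z in 𝓝[>] t, g z i < m + r * (z - t) := by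
    intro i hi
    rcases (s.le_sup' (g t) hi).lt_or_eq with hlt | heq
    · have hcont : ContinuousAt (fun z => g z i - r * (z - t)) t := by
        have := (hg i hi).continuousAt
        fun_prop
      have := hcont.eventually (Iio_mem_nhds (by simpa using hlt))
      filter_upwards [nhdsWithin_le_nhds this] with z hz
      linarith
    · filter_upwards [(hg i hi).hasDerivWithinAt.limsup_slope_le' (lt_irrefl t) (hmax i hi heq),
        self_mem_nhdsWithin] with z hz hzt
      rw [slope_def_field, div_lt_iff₀ (sub_pos.2 hzt)] at hz
      linarith
  filter_upwards [(eventually_all_finset s).2 hcomp, self_mem_nhdsWithin] with z hz hzt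
  rw [slope_def_field, div_lt_iff₀ (sub_pos.2 hzt), sub_lt_iff_lt_add', Finset.sup'_lt_iff]
  exact hz

theorem Finset.sup'_le_sup'_of_hasDerivAt_nonpos_at_max {ι : Type*} {s : Finset ι}
    (hs : s.Nonempty) {x x' : ℝ → ι → ℝ} {a : ℝ}
    (hx : ∀ t, a ≤ t → ∀ i ∈ s, HasDerivAt (fun τ => x τ i) (x' t i) t)
    (hmax : ∀ t, a ≤ t → ∀ i ∈ s, x t i = s.sup' hs (x t) → x' t i ≤ 0)
    {b : ℝ} (hb : a ≤ b) : s.sup' hs (x b) ≤ s.sup' hs (x a) := by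
  refine image_le_of_liminf_slope_right_le_deriv_boundary (f := fun τ => s.sup' hs (x τ))
    (B := fun _ => s.sup' hs (x a)) (B' := 0)
    ?_ le_rfl continuousOn_const (fun _ _ => hasDerivWithinAt_const _ _ _) ?_ ⟨hb, le_rfl⟩
  · exact ContinuousOn.finset_sup'_apply hs fun i hi τ hτ =>
      (hx τ hτ.1 i hi).continuousAt.continuousWithinAt
  · intro t ht r hr
    exact (eventually_slope_sup'_lt hs (fun i hi => hx t ht.1 i hi)
      fun i hi heq => (hmax t ht.1 i hi heq).trans_lt hr).frequently

theorem tendsto_of_hasDerivAt_ge_mul_sub {f g g' : ℝ → ℝ} {M c a : ℝ} (hc : 0 < c)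
    (hf : Tendsto f atTop (𝓝 M)) (hg : ∀ t, a ≤ t → HasDerivAt g (g' t) t)
    (hg'₀ : ∀ t, a ≤ t → 0 ≤ g' t) (hg' : ∀ t, a ≤ t → g t ≤ f t → c * (f t - g t) ≤ g' t)
    (hgM : ∀ t, a ≤ t → g t ≤ M) : Tendsto g atTop (𝓝 M) := by
  refine tendsto_order.2 ⟨fun m hm => ?_, fun m hm =>
    (eventually_ge_atTop a).mono fun t ht => (hgM t ht).trans_lt hm⟩
  obtain ⟨T, hT⟩ := eventually_atTop.1
    ((hf.eventually (lt_mem_nhds (add_lt_of_lt_sub_left (half_lt_self (sub_pos.2 hm))))).and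
      (eventually_ge_atTop a))
  suffices ∃ s, T ≤ s ∧ m < g s by
    obtain ⟨s, hTs, hs⟩ := this
    filter_upwards [eventually_ge_atTop s] with t hst
    exact hs.trans_le (monotoneOn_of_hasDerivAt_nonneg hg hg'₀ (hT s hTs).2
      ((hT s hTs).2.trans hst) hst)
  by_contra! hgm
  -- on `[T, ∞)` the gap `f - g` stays above `(M - m) / 2`, so `g` grows at least linearly
  have hgrowth : ∀ t, T ≤ t → g T + c * ((M - m) / 2) * (t - T) ≤ g t :=
    fun t => add_mul_sub_le_of_hasDerivAt_ge (fun τ hτ => hg τ (hT τ hτ).2) fun τ hτ => by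
      obtain ⟨hfτ, haτ⟩ := hT τ hτ
      have hgτ := hgm τ hτ
      nlinarith [hg' τ haτ (by linarith)]
  have hC : 0 < c * ((M - m) / 2) := by nlinarith
  have hlin : Tendsto (fun t => g T + c * ((M - m) / 2) * (t - T)) atTop atTop :=
    tendsto_atTop_add_const_left _ _
      ((tendsto_atTop_add_const_right _ _ tendsto_id).const_mul_atTop hC)
  obtain ⟨t, hMt, hTt⟩ := ((hlin.eventually_gt_atTop M).and (eventually_ge_atTop T)).exists
  linarith [hgrowth t hTt, hgM t ((hT T le_rfl).2.trans hTt)]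

namespace SimpleGraph

variable {V : Type*} [Fintype V] [DecidableEq V] (G : SimpleGraph V) [DecidableRel G.Adj]

def maxConsensusRate (a : V → ℝ → ℝ) (t : ℝ) (y : V → ℝ) (i : V) : ℝ :=
  (insert i (G.neighborFinset i)).sup' (Finset.insert_nonempty i _) fun j => a j t * (y j - y i)

variable {G} {a : V → ℝ → ℝ} {t : ℝ} {y : V → ℝ}

theorem maxConsensusRate_nonneg (i : V) : 0 ≤ G.maxConsensusRate a t y i :=
  (mul_eq_zero_of_right _ (sub_self (y i))).symm.trans_le
    (Finset.le_sup' (fun j => a j t * (y j - y i)) (Finset.mem_insert_self i _))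

theorem mul_sub_le_maxConsensusRate {u v : V} (huv : G.Adj u v) :
    a u t * (y u - y v) ≤ G.maxConsensusRate a t y v :=
  Finset.le_sup' (fun j => a j t * (y j - y v))
    (Finset.mem_insert_of_mem ((G.mem_neighborFinset v u).2 huv.symm))

theorem maxConsensusRate_nonpos_of_forall_le (ha : ∀ j, 0 ≤ a j t) {i : V}
    (hi : ∀ j, y j ≤ y i) : G.maxConsensusRate a t y i ≤ 0 :=
  Finset.sup'_le _ _ fun j _ => mul_nonpos_of_nonneg_of_nonpos (ha j) (sub_nonpos.2 (hi j))

end SimpleGraph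

/-- Continuous-time maximum consensus: under the dynamics
ẋ_i(t) = max_{j ∈ N_i ∪ {i}} a_j(t)·(x_j(t) − x_i(t)) with continuous weight
functions uniformly bounded in [δ, ā] with 0 < δ ≤ ā, every node's state
converges to the maximum of the initial states. -/
theorem ct_maximum_consensus
    (n : ℕ) (hn : 2 ≤ n)
    (G : SimpleGraph (Fin n)) [DecidableRel G.Adj]
    (hconn : G.Connected)
    (x : ℝ → Fin n → ℝ)
    (a : Fin n → ℝ → ℝ)
    (δ abar : ℝ) (hδ : 0 < δ)
    (hbound : ∀ j, ∀ t : ℝ, 0 ≤ t → δ ≤ a j t ∧ a j t ≤ abar)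
    (hdyn : ∀ i, ∀ t : ℝ, 0 ≤ t →
      HasDerivAt (fun s => x s i)
        ((insert i (G.neighborFinset i)).sup'
          (Finset.insert_nonempty i _) (fun j => a j t * (x t j - x t i))) t) :
    ∀ i, Tendsto (fun t => x t i) atTop
      (𝓝 (Finset.univ.sup' (Finset.univ_nonempty_iff.mpr ⟨⟨0, by omega⟩⟩)
            (fun j => x 0 j))) := by
  set M := Finset.univ.sup' (Finset.univ_nonempty_iff.mpr ⟨⟨0, by omega⟩⟩) (fun j => x 0 j)
  have hmono : ∀ i, MonotoneOn (fun t => x t i) (Ici 0) := fun i =>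
    monotoneOn_of_hasDerivAt_nonneg (hdyn i) fun _ _ => G.maxConsensusRate_nonneg i
  have hle : ∀ t, 0 ≤ t → ∀ i, x t i ≤ M := fun t ht i =>
    (Finset.le_sup' (x t) (Finset.mem_univ i)).trans
      (Finset.sup'_le_sup'_of_hasDerivAt_nonpos_at_max _ (fun t ht i _ => hdyn i t ht)
        (fun t ht i _ hi => G.maxConsensusRate_nonpos_of_forall_le
          (fun j => hδ.le.trans (hbound j t ht).1)
          fun j => hi ▸ Finset.le_sup' (x t) (Finset.mem_univ j)) ht)
  obtain ⟨P, -, hP⟩ := Finset.exists_mem_eq_sup' _ fun j => x 0 j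
  have hPM : Tendsto (fun t => x t P) atTop (𝓝 M) :=
    tendsto_const_nhds.congr' <| (eventually_ge_atTop 0).mono fun t ht =>
      le_antisymm (hP.trans_le (hmono P self_mem_Ici ht ht)) (hle t ht P)
  have hstep : ∀ u v, G.Adj u v → Tendsto (fun t => x t u) atTop (𝓝 M) →
      Tendsto (fun t => x t v) atTop (𝓝 M) := fun u v huv hu =>
    tendsto_of_hasDerivAt_ge_mul_sub hδ hu (hdyn v) (fun _ _ => G.maxConsensusRate_nonneg v)
      (fun t ht hvu => (mul_le_mul_of_nonneg_right (hbound u t ht).1 (sub_nonneg.2 hvu)).trans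
        (SimpleGraph.mul_sub_le_maxConsensusRate huv)) fun t ht => hle t ht v
  intro i
  induction SimpleGraph.reachable_eq_reflTransGen ▸ hconn P i with
  | refl => exact hPM
  | tail _ huv ih => exact hstep _ _ huv ih
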